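/- Let f : [a,b] → ℝ have an absolutely continuous (n−1)st derivative. Then for every x ∈ [a,b], ∫_a^b f(t) dt = Σ_{k=0}^{n−1} [((b−x)^{k+1} + (−1)^k (x−a)^{k+1})/(k+1)!] f^{(k)}(x) + (−1)^n ∫_a^b K_n(x,t) f^{(n)}(t) dt, where K_n(x,t) = (t−a)^n/n! for a ≤ t ≤ x and K_n(x,t) = (t−b)^n/n! for x < t ≤ b. -/

import Mathlib

open MeasureTheory Set

private lemma taylor_aux (c x : ℝ) (n : ℕ) (fd : ℕ → ℝ → ℝ)
    (h : ∀ k < n, ∀ t ∈ uIcc c x, HasDerivAt (fd k) (fd (k + 1) t) t)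
    (hint : IntervalIntegrable (fd n) volume c x) :
    ∫ t in c..x, fd 0 t =
      (∑ k ∈ Finset.range n,
        (-1 : ℝ) ^ k * (x - c) ^ (k + 1) / (Nat.factorial (k + 1)) * fd k x)
      + (-1 : ℝ) ^ n * ∫ t in c..x, (t - c) ^ n / (Nat.factorial n) * fd n t := by
  induction n with
  | zero => simp
  | succ n ih =>
    have hcontn : ContinuousOn (fd n) (uIcc c x) := fun t ht =>
      ((h n n.lt_succ_self t ht).continuousAt).continuousWithinAt
    have hintn : IntervalIntegrable (fd n) volume c x :=
      hcontn.intervalIntegrable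
    have IH := ih (fun k hk => h k (hk.trans n.lt_succ_self)) hintn
    have hu : ∀ t ∈ uIcc c x,
        HasDerivAt (fun t => (t - c) ^ (n + 1) / (Nat.factorial (n + 1)))
          ((t - c) ^ n / (Nat.factorial n)) t := by
      intro t _
      have h1 : HasDerivAt (fun t => (t - c) ^ (n + 1))
          ((↑(n + 1) : ℝ) * (t - c) ^ n) t := by
        have := ((hasDerivAt_id t).sub_const c).fun_pow (n + 1)
        simpa using this
      have h2 := h1.div_const (Nat.factorial (n + 1) : ℝ)
      refine h2.congr_deriv ?_
      have hfp : (Nat.factorial n : ℝ) ≠ 0 := by positivity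
      have hfp1 : (Nat.factorial (n + 1) : ℝ) ≠ 0 := by positivity
      rw [Nat.factorial_succ]
      push_cast
      field_simp
    have hu' : IntervalIntegrable (fun t => (t - c) ^ n / (Nat.factorial n))
        volume c x :=
      ((continuous_id.sub continuous_const).pow n |>.div_const _).intervalIntegrable c x
    have ibp := intervalIntegral.integral_mul_deriv_eq_deriv_mul hu
      (fun t ht => h n n.lt_succ_self t ht) hu' hint
    simp only [sub_self, zero_pow (Nat.succ_ne_zero n), zero_div, zero_mul,
      sub_zero] at ibp
    have key : ∫ t in c..x, (t - c) ^ n / (Nat.factorial n) * fd n t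
        = (x - c) ^ (n + 1) / (Nat.factorial (n + 1)) * fd n x
          - ∫ t in c..x, (t - c) ^ (n + 1) / (Nat.factorial (n + 1)) * fd (n + 1) t := by
      rw [ibp]; ring
    rw [IH, key, Finset.sum_range_succ]
    ring

theorem taylor_kernel_identity
    (a b : ℝ) (n : ℕ) (fd : ℕ → ℝ → ℝ) (hab : a < b) (hn : 1 ≤ n)
    (hderiv : ∀ k < n, ∀ x ∈ Icc a b, HasDerivAt (fd k) (fd (k + 1) x) x)
    (hint : IntervalIntegrable (fd n) volume a b) :
    ∀ x ∈ Icc a b,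
      ∫ t in a..b, fd 0 t =
        (∑ k ∈ Finset.range n,
          (((b - x) ^ (k + 1) + (-1 : ℝ) ^ k * (x - a) ^ (k + 1)) /
            (Nat.factorial (k + 1))) * fd k x) +
        (-1 : ℝ) ^ n *
          ∫ t in a..b,
            (if t ≤ x then (t - a) ^ n / (Nat.factorial n)
             else (t - b) ^ n / (Nat.factorial n)) * fd n t := by
  intro x hx
  obtain ⟨hax, hxb⟩ := hx
  have hsub1 : uIcc a x ⊆ Icc a b := by
    rw [uIcc_of_le hax]; exact Icc_subset_Icc le_rfl hxb
  have hsub2 : uIcc b x ⊆ Icc a b := by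
    rw [uIcc_of_ge hxb]; exact Icc_subset_Icc hax le_rfl
  have huIcc : uIcc a b = Icc a b := uIcc_of_le hab.le
  have hint1 : IntervalIntegrable (fd n) volume a x :=
    hint.mono_set (by rw [huIcc]; exact hsub1)
  have hint2 : IntervalIntegrable (fd n) volume b x :=
    hint.mono_set (by rw [huIcc]; exact hsub2)
  have A := taylor_aux a x n fd
    (fun k hk t ht => hderiv k hk t (hsub1 ht)) hint1
  have B := taylor_aux b x n fd
    (fun k hk t ht => hderiv k hk t (hsub2 ht)) hint2
  -- continuity of fd 0
  have hcont0 : ContinuousOn (fd 0) (Icc a b) := fun t ht =>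
    ((hderiv 0 hn t ht).continuousAt).continuousWithinAt
  have hi0ax : IntervalIntegrable (fd 0) volume a x :=
    (hcont0.mono hsub1).intervalIntegrable
  have hi0xb : IntervalIntegrable (fd 0) volume x b :=
    (hcont0.mono (by rw [uIcc_of_le hxb]; exact Icc_subset_Icc hax le_rfl)).intervalIntegrable
  have hsplit : ∫ t in a..b, fd 0 t = (∫ t in a..x, fd 0 t) + ∫ t in x..b, fd 0 t :=
    (intervalIntegral.integral_add_adjacent_intervals hi0ax hi0xb).symm
  -- kernel split
  set K : ℝ → ℝ := fun t =>
    (if t ≤ x then (t - a) ^ n / (Nat.factorial n)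
     else (t - b) ^ n / (Nat.factorial n)) * fd n t with hK
  have hKa : IntervalIntegrable K volume a x := by
    apply IntervalIntegrable.congr_ae
      ((hint1.continuousOn_mul (f := fd n)
        (g := fun t => (t - a) ^ n / (Nat.factorial n)) (by fun_prop)))
    rw [Filter.EventuallyEq, ae_restrict_iff' measurableSet_uIoc]
    filter_upwards with t ht
    rw [uIoc_of_le hax] at ht
    simp [hK, if_pos ht.2]
  have hKb : IntervalIntegrable K volume x b := by
    apply IntervalIntegrable.congr_ae
      (((hint.mono_set (by rw [huIcc, uIcc_of_le hxb]; exact Icc_subset_Icc hax le_rfl)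
        : IntervalIntegrable (fd n) volume x b).continuousOn_mul (f := fd n)
        (g := fun t => (t - b) ^ n / (Nat.factorial n)) (by fun_prop)))
    rw [Filter.EventuallyEq, ae_restrict_iff' measurableSet_uIoc]
    filter_upwards with t ht
    rw [uIoc_of_le hxb] at ht
    simp [hK, if_neg (not_le.mpr ht.1)]
  have hKsplit : ∫ t in a..b, K t = (∫ t in a..x, K t) + ∫ t in x..b, K t :=
    (intervalIntegral.integral_add_adjacent_intervals hKa hKb).symm
  have hKa' : ∫ t in a..x, K t = ∫ t in a..x, (t - a) ^ n / (Nat.factorial n) * fd n t := by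
    apply intervalIntegral.integral_congr_ae
    filter_upwards with t ht
    rw [uIoc_of_le hax] at ht
    simp [hK, if_pos ht.2]
  have hKb' : ∫ t in x..b, K t = ∫ t in x..b, (t - b) ^ n / (Nat.factorial n) * fd n t := by
    apply intervalIntegral.integral_congr_ae
    filter_upwards with t ht
    rw [uIoc_of_le hxb] at ht
    simp [hK, if_neg (not_le.mpr ht.1)]
  have hxbint : ∫ t in x..b, fd 0 t = - ∫ t in b..x, fd 0 t :=
    intervalIntegral.integral_symm b x
  have hbx : ∫ t in b..x, (t - b) ^ n / (Nat.factorial n) * fd n t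
      = - ∫ t in x..b, (t - b) ^ n / (Nat.factorial n) * fd n t :=
    intervalIntegral.integral_symm x b
  have hsum : (∑ k ∈ Finset.range n,
        (-1 : ℝ) ^ k * (x - a) ^ (k + 1) / (Nat.factorial (k + 1)) * fd k x)
      - (∑ k ∈ Finset.range n,
        (-1 : ℝ) ^ k * (x - b) ^ (k + 1) / (Nat.factorial (k + 1)) * fd k x)
      = ∑ k ∈ Finset.range n,
        (((b - x) ^ (k + 1) + (-1 : ℝ) ^ k * (x - a) ^ (k + 1)) /
          (Nat.factorial (k + 1))) * fd k x := by
    rw [← Finset.sum_sub_distrib]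
    refine Finset.sum_congr rfl fun k _ => ?_
    have hb : (b - x : ℝ) = (-1) * (x - b) := by ring
    have key : ((b - x) : ℝ) ^ (k + 1) = -((-1 : ℝ) ^ k * (x - b) ^ (k + 1)) := by
      rw [hb, mul_pow, pow_succ]
      ring
    rw [key]
    ring
  rw [hsplit, hxbint, A, B, hbx, hKsplit, hKa', hKb', ← hsum]
  ring
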